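/- Error estimate for the smooth component (two equations): Assume n = 2 and √ε₂ ≤ √α/6. Let v = (v₁,v₂) be any vector function on Ω̄ whose components have continuous partial derivatives ∂ₜ^m v_i (m ≤ 2), ∂ₓ^l v_i (l ≤ 4) and ∂ₓ^l ∂ₜ v_i (l ≤ 2) on Ω̄, satisfying Lv = f on Ω and, for some constant C₀: |∂ₜ^m v_i| ≤ C₀ (m = 0,1,2), |∂ₓ^l v_i| ≤ C₀ (l = 1,2), |∂ₓ^l v_i| ≤ C₀ ε_i^{−(l−2)/2} (l = 3,4), and |∂ₓ^l ∂ₜ v_i| ≤ C₀ (l = 1,2) on Ω̄. Let V be the mesh function on the Shishkin grid satisfying (L^{N,M}V)_i(x_j,t_k) = f_i(x_j,t_k) for 1 ≤ j ≤ N−1, 1 ≤ k ≤ M, (β₀^{N,M}V)_i(0,t_k) = (β₀v)_i(0,t_k), (β₁^{N,M}V)_i(1,t_k) = (β₁v)_i(1,t_k) for 1 ≤ k ≤ M, and V_i(x_j,0) = v_i(x_j,0). Then there exists a constant C, depending only on C₀, α, T and sup norms of A, and independent of ε₁, ε₂, N and M, such that for all N = 8q with integer q ≥ 3 and all M ≥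 1: max over i ∈ {1,2}, 0 ≤ j ≤ N, 0 ≤ k ≤ M of |V_i(x_j,t_k) − v_i(x_j,t_k)| ≤ C (M^{−1} + N^{−1} ln N). -/

import Mathlib

/-
The error `e = V - v` is controlled by a discrete maximum principle: at a maximum of `e` over
components and mesh points of one time level, the backward time difference, the second
difference and the (nonpositive) off-diagonal coupling all have a sign, while the row sums of
`A` exceed `α`. Hence `max |e|` over a level is bounded by its value at the previous level, by
`(interior truncation error) / α`, and by the truncation error of the Robin conditions.
Taylor expansion bounds the interior truncation error by `C₀ Δt + 2 ε |∂ₓ³v| (h₋ + h₊)`, and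
`ε |∂ₓ³v| ≤ C₀ √ε ≤ C₀`, while the Robin conditions contribute `√ε C₀ h`. Every step of the
Shishkin mesh is at most `2 / N`, so both are `O(M⁻¹ + N⁻¹)`.
-/

/-- The piecewise-uniform Shishkin mesh on `[0,1]` with `N = 8q` mesh
intervals and transition parameters
`σ₂ = min(1/4, 2√(ε₂/α) ln N)`, `σ₁ = min(σ₂/2, 2√(ε₁/α) ln N)`:
each of `[0,σ₁]`, `[σ₁,σ₂]`, `[1-σ₂,1-σ₁]`, `[1-σ₁,1]` carries `q = N/8`
equal mesh intervals and `[σ₂,1-σ₂]` carries `4q = N/2` equal mesh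
intervals. -/
noncomputable def shMesh (α ε1 ε2 : ℝ) (q j : ℕ) : ℝ :=
  let N : ℝ := 8 * (q : ℝ)
  let σ2 : ℝ := min (1 / 4) (2 * Real.sqrt (ε2 / α) * Real.log N)
  let σ1 : ℝ := min (σ2 / 2) (2 * Real.sqrt (ε1 / α) * Real.log N)
  if j ≤ q then σ1 * (j : ℝ) / (q : ℝ)
  else if j ≤ 2 * q then σ1 + (σ2 - σ1) * ((j : ℝ) - (q : ℝ)) / (q : ℝ)
  else if j ≤ 6 * q then σ2 + (1 - 2 * σ2) * ((j : ℝ) - 2 * (q : ℝ)) / (4 * (q : ℝ))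
  else if j ≤ 7 * q then (1 - σ2) + (σ2 - σ1) * ((j : ℝ) - 6 * (q : ℝ)) / (q : ℝ)
  else (1 - σ1) + σ1 * ((j : ℝ) - 7 * (q : ℝ)) / (q : ℝ)

noncomputable def piecewiseUniformMesh (σ1 σ2 : ℝ) (q j : ℕ) : ℝ :=
  if j ≤ q then σ1 * (j : ℝ) / (q : ℝ)
  else if j ≤ 2 * q then σ1 + (σ2 - σ1) * ((j : ℝ) - (q : ℝ)) / (q : ℝ)
  else if j ≤ 6 * q then σ2 + (1 - 2 * σ2) * ((j : ℝ) - 2 * (q : ℝ)) / (4 * (q : ℝ))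
  else if j ≤ 7 * q then (1 - σ2) + (σ2 - σ1) * ((j : ℝ) - 6 * (q : ℝ)) / (q : ℝ)
  else (1 - σ1) + σ1 * ((j : ℝ) - 7 * (q : ℝ)) / (q : ℝ)

namespace piecewiseUniformMesh

variable {σ1 σ2 : ℝ} {q : ℕ}

theorem zero : piecewiseUniformMesh σ1 σ2 q 0 = 0 := by simp [piecewiseUniformMesh]

theorem eight_mul (hq : q ≠ 0) : piecewiseUniformMesh σ1 σ2 q (8 * q) = 1 := by
  have : (q : ℝ) ≠ 0 := by exact_mod_cast hq
  simp only [piecewiseUniformMesh, if_neg (show ¬ 8 * q ≤ 7 * q by omega),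
    if_neg (show ¬ 8 * q ≤ 6 * q by omega), if_neg (show ¬ 8 * q ≤ 2 * q by omega),
    if_neg (show ¬ 8 * q ≤ q by omega)]
  push_cast
  field_simp
  ring

theorem succ_sub (hq : q ≠ 0) (j : ℕ) :
    piecewiseUniformMesh σ1 σ2 q (j + 1) - piecewiseUniformMesh σ1 σ2 q j =
      if j < q then σ1 / q else if j < 2 * q then (σ2 - σ1) / q
      else if j < 6 * q then (1 - 2 * σ2) / (4 * q) else if j < 7 * q then (σ2 - σ1) / q
      else σ1 / q := by
  have : (q : ℝ) ≠ 0 := by exact_mod_cast hq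
  simp only [piecewiseUniformMesh]
  split_ifs <;> first
    | omega
    | (push_cast; field_simp; ring1)
    | (rw [show j = q by omega]; push_cast; field_simp; ring1)
    | (rw [show j = 2 * q by omega]; push_cast; field_simp; ring1)
    | (rw [show j = 6 * q by omega]; push_cast; field_simp; ring1)
    | (rw [show j = 7 * q by omega]; push_cast; field_simp; ring1)

theorem succ_sub_pos (hq : q ≠ 0) (h1 : 0 < σ1) (h12 : σ1 < σ2) (h2 : σ2 < 1 / 2) (j : ℕ) :
    0 < piecewiseUniformMesh σ1 σ2 q (j + 1) - piecewiseUniformMesh σ1 σ2 q j := by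
  have : (0 : ℝ) < q := by positivity
  rw [succ_sub hq]
  split_ifs <;> apply div_pos <;> linarith

theorem succ_sub_le (hq : q ≠ 0) (h1 : 0 ≤ σ1) (h12 : σ1 ≤ σ2) (h2 : σ2 ≤ 1 / 4) (j : ℕ) :
    piecewiseUniformMesh σ1 σ2 q (j + 1) - piecewiseUniformMesh σ1 σ2 q j ≤ 1 / (4 * q) := by
  have : (0 : ℝ) < q := by positivity
  rw [succ_sub hq]
  split_ifs <;> rw [div_le_div_iff₀ (by positivity) (by positivity)] <;> nlinarith

theorem strictMono (hq : q ≠ 0) (h1 : 0 < σ1) (h12 : σ1 < σ2) (h2 : σ2 < 1 / 2) :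
    StrictMono (piecewiseUniformMesh σ1 σ2 q) :=
  strictMono_nat_of_lt_succ fun j => sub_pos.1 (succ_sub_pos hq h1 h12 h2 j)

end piecewiseUniformMesh

theorem one_le_log_eight_mul {q : ℕ} (hq : q ≠ 0) : 1 ≤ Real.log (8 * (q : ℝ)) := by
  have : (1 : ℝ) ≤ q := by exact_mod_cast Nat.one_le_iff_ne_zero.2 hq
  rw [Real.le_log_iff_exp_le (by positivity)]
  linarith [Real.exp_one_lt_d9]

noncomputable def shSigma₂ (α ε2 : ℝ) (q : ℕ) : ℝ :=
  min (1 / 4) (2 * Real.sqrt (ε2 / α) * Real.log (8 * (q : ℝ)))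

noncomputable def shSigma₁ (α ε1 ε2 : ℝ) (q : ℕ) : ℝ :=
  min (shSigma₂ α ε2 q / 2) (2 * Real.sqrt (ε1 / α) * Real.log (8 * (q : ℝ)))

theorem shMesh_eq_piecewiseUniformMesh (α ε1 ε2 : ℝ) (q : ℕ) :
    shMesh α ε1 ε2 q = piecewiseUniformMesh (shSigma₁ α ε1 ε2 q) (shSigma₂ α ε2 q) q := rfl

section ShishkinMesh

variable {α ε1 ε2 : ℝ} {q : ℕ}

theorem shSigma_bounds (hα : 0 < α) (hε1 : 0 < ε1) (hε2 : 0 < ε2) (hq : q ≠ 0) :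
    0 < shSigma₁ α ε1 ε2 q ∧ shSigma₁ α ε1 ε2 q < shSigma₂ α ε2 q ∧ shSigma₂ α ε2 q ≤ 1 / 4 := by
  have hlog := zero_lt_one.trans_le (one_le_log_eight_mul hq)
  have h2 : 0 < shSigma₂ α ε2 q := lt_min (by norm_num) (by positivity)
  have h1 : 0 < shSigma₁ α ε1 ε2 q := lt_min (by linarith) (by positivity)
  exact ⟨h1, (min_le_left _ _).trans_lt (by linarith), min_le_left _ _⟩

theorem shMesh_strictMono (hα : 0 < α) (hε1 : 0 < ε1) (hε2 : 0 < ε2) (hq : q ≠ 0) :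
    StrictMono (shMesh α ε1 ε2 q) := by
  obtain ⟨h1, h12, h2⟩ := shSigma_bounds hα hε1 hε2 hq
  rw [shMesh_eq_piecewiseUniformMesh]
  exact piecewiseUniformMesh.strictMono hq h1 h12 (h2.trans_lt (by norm_num))

theorem shMesh_succ_sub_le (hα : 0 < α) (hε1 : 0 < ε1) (hε2 : 0 < ε2) (hq : q ≠ 0) (j : ℕ) :
    shMesh α ε1 ε2 q (j + 1) - shMesh α ε1 ε2 q j ≤ 1 / (4 * q) := by
  obtain ⟨h1, h12, h2⟩ := shSigma_bounds hα hε1 hε2 hq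
  rw [shMesh_eq_piecewiseUniformMesh]
  exact piecewiseUniformMesh.succ_sub_le hq h1.le h12.le h2 j

theorem abs_shMesh_succ_sub_le (hα : 0 < α) (hε1 : 0 < ε1) (hε2 : 0 < ε2) (hq : q ≠ 0) (j : ℕ) :
    |shMesh α ε1 ε2 q (j + 1) - shMesh α ε1 ε2 q j| ≤ 1 / (4 * q) := by
  rw [abs_of_pos (sub_pos.2 (shMesh_strictMono hα hε1 hε2 hq j.lt_succ_self))]
  exact shMesh_succ_sub_le hα hε1 hε2 hq j

theorem shMesh_zero : shMesh α ε1 ε2 q 0 = 0 := by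
  rw [shMesh_eq_piecewiseUniformMesh, piecewiseUniformMesh.zero]

theorem shMesh_eight_mul (hq : q ≠ 0) : shMesh α ε1 ε2 q (8 * q) = 1 := by
  rw [shMesh_eq_piecewiseUniformMesh, piecewiseUniformMesh.eight_mul hq]

theorem shMesh_mem_Icc (hα : 0 < α) (hε1 : 0 < ε1) (hε2 : 0 < ε2) (hq : q ≠ 0) {j : ℕ}
    (hj : j ≤ 8 * q) : shMesh α ε1 ε2 q j ∈ Set.Icc 0 1 := by
  have hmono := (shMesh_strictMono hα hε1 hε2 hq).monotone
  refine ⟨?_, ?_⟩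
  · simpa [shMesh_zero] using hmono (Nat.zero_le j)
  · simpa [shMesh_eight_mul hq] using hmono hj

theorem shMesh_succ_sub_pred_le (hα : 0 < α) (hε1 : 0 < ε1) (hε2 : 0 < ε2) (hq : q ≠ 0) {j : ℕ}
    (hj : 0 < j) : shMesh α ε1 ε2 q (j + 1) - shMesh α ε1 ε2 q (j - 1) ≤ 1 / (2 * q) := by
  have h1 := shMesh_succ_sub_le hα hε1 hε2 hq j
  have h2 := shMesh_succ_sub_le hα hε1 hε2 hq (j - 1)
  rw [Nat.sub_add_cancel hj] at h2
  have : (1 : ℝ) / (4 * q) + 1 / (4 * q) = 1 / (2 * q) := by field_simp; norm_num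
  linarith

end ShishkinMesh

noncomputable def meshSecondDiff (X u : ℕ → ℝ) (j : ℕ) : ℝ :=
  2 / (X (j + 1) - X (j - 1)) *
    ((u (j + 1) - u j) / (X (j + 1) - X j) - (u j - u (j - 1)) / (X j - X (j - 1)))

section Taylor

open Set

variable {f f' f'' f''' : ℝ → ℝ} {s : Set ℝ} {K : ℝ}

theorem abs_taylor₁_remainder_le (hs : Convex ℝ s)
    (hf : ∀ y ∈ s, HasDerivWithinAt f (f' y) s y)
    (hf' : ∀ y ∈ s, HasDerivWithinAt f' (f'' y) s y)
    (hK : ∀ y ∈ s, |f'' y| ≤ K) {c x : ℝ} (hc : c ∈ s) (hx : x ∈ s) :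
    |f x - f c - (x - c) * f' c| ≤ K * |x - c| ^ 2 := by
  have hsub : uIcc c x ⊆ s := hs.ordConnected.uIcc_subset hc hx
  have hf'_lip : ∀ y ∈ uIcc c x, ‖f' y - f' c‖ ≤ K * |x - c| := by
    intro y hy
    have h := (convex_uIcc c x).norm_image_sub_le_of_norm_hasDerivWithin_le
      (fun z hz => (hf' z (hsub hz)).mono hsub)
      (fun z hz => (Real.norm_eq_abs _).trans_le (hK z (hsub hz))) left_mem_uIcc hy
    rw [Real.norm_eq_abs] at h ⊢
    exact h.trans (mul_le_mul_of_nonneg_left (abs_sub_le_of_uIcc_subset_uIcc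
      (uIcc_subset_uIcc_left hy)) ((abs_nonneg _).trans (hK c hc)))
  have h := (convex_uIcc c x).norm_image_sub_le_of_norm_hasDerivWithin_le
    (f := fun y => f y - y * f' c)
    (fun y hy => (((hf y (hsub hy)).mono hsub).sub
      ((hasDerivWithinAt_id y _).mul_const (f' c))).congr_deriv (by ring))
    hf'_lip left_mem_uIcc right_mem_uIcc
  rw [Real.norm_eq_abs, Real.norm_eq_abs] at h
  calc |f x - f c - (x - c) * f' c| = |f x - x * f' c - (f c - c * f' c)| := by ring_nf
    _ ≤ K * |x - c| * |x - c| := h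
    _ = K * |x - c| ^ 2 := by ring

theorem abs_taylor₂_remainder_le (hs : Convex ℝ s)
    (hf : ∀ y ∈ s, HasDerivWithinAt f (f' y) s y)
    (hf' : ∀ y ∈ s, HasDerivWithinAt f' (f'' y) s y)
    (hf'' : ∀ y ∈ s, HasDerivWithinAt f'' (f''' y) s y)
    (hK : ∀ y ∈ s, |f''' y| ≤ K) {c x : ℝ} (hc : c ∈ s) (hx : x ∈ s) :
    |f x - f c - (x - c) * f' c - (x - c) ^ 2 / 2 * f'' c| ≤ K * |x - c| ^ 3 := by
  have hsub : uIcc c x ⊆ s := hs.ordConnected.uIcc_subset hc hx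
  have hg' : ∀ y ∈ uIcc c x, ‖f' y - f' c - (y - c) * f'' c‖ ≤ K * |x - c| ^ 2 := by
    intro y hy
    rw [Real.norm_eq_abs]
    exact (abs_taylor₁_remainder_le hs hf' hf'' hK hc (hsub hy)).trans
      (mul_le_mul_of_nonneg_left (pow_le_pow_left₀ (abs_nonneg _)
        (abs_sub_le_of_uIcc_subset_uIcc (uIcc_subset_uIcc_left hy)) 2)
        ((abs_nonneg _).trans (hK c hc)))
  have h := (convex_uIcc c x).norm_image_sub_le_of_norm_hasDerivWithin_le
    (f := fun y => f y - y * f' c - (y - c) ^ 2 / 2 * f'' c)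
    (fun y hy => ((((hf y (hsub hy)).mono hsub).sub
      ((hasDerivWithinAt_id y _).mul_const (f' c))).sub
      ((((hasDerivWithinAt_id y _).sub_const c).pow 2).div_const 2 |>.mul_const (f'' c)))
      |>.congr_deriv (by simp))
    hg' left_mem_uIcc right_mem_uIcc
  rw [Real.norm_eq_abs, Real.norm_eq_abs] at h
  calc |f x - f c - (x - c) * f' c - (x - c) ^ 2 / 2 * f'' c|
      = |f x - x * f' c - (x - c) ^ 2 / 2 * f'' c -
          (f c - c * f' c - (c - c) ^ 2 / 2 * f'' c)| := by
        ring_nf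
    _ ≤ K * |x - c| ^ 2 * |x - c| := h
    _ = K * |x - c| ^ 3 := by ring

theorem abs_divDiff_sub_deriv_le (hs : Convex ℝ s)
    (hf : ∀ y ∈ s, HasDerivWithinAt f (f' y) s y)
    (hf' : ∀ y ∈ s, HasDerivWithinAt f' (f'' y) s y)
    (hK : ∀ y ∈ s, |f'' y| ≤ K) {x y : ℝ} (hx : x ∈ s) (hy : y ∈ s) (hxy : x ≠ y) :
    |(f y - f x) / (y - x) - f' x| ≤ K * |y - x| := by
  have hyx : 0 < |y - x| := abs_pos.2 (sub_ne_zero.2 hxy.symm)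
  have h := abs_taylor₁_remainder_le hs hf hf' hK hx hy
  rw [show (f y - f x) / (y - x) - f' x = (f y - f x - (y - x) * f' x) / (y - x) by
    field_simp [sub_ne_zero.2 hxy.symm], abs_div, div_le_iff₀ hyx]
  linarith

theorem abs_meshSecondDiff_sub_le (hs : Convex ℝ s)
    (hf : ∀ y ∈ s, HasDerivWithinAt f (f' y) s y)
    (hf' : ∀ y ∈ s, HasDerivWithinAt f' (f'' y) s y)
    (hf'' : ∀ y ∈ s, HasDerivWithinAt f'' (f''' y) s y)
    (hK : ∀ y ∈ s, |f''' y| ≤ K) {X : ℕ → ℝ} {j : ℕ}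
    (hl : X (j - 1) ∈ s) (hm : X j ∈ s) (hr : X (j + 1) ∈ s)
    (hlm : X (j - 1) < X j) (hmr : X j < X (j + 1)) :
    |meshSecondDiff X (fun i => f (X i)) j - f'' (X j)| ≤
      2 * K * (X (j + 1) - X (j - 1)) := by
  unfold meshSecondDiff
  set a := X (j - 1)
  set b := X j
  set c := X (j + 1)
  have hR := abs_taylor₂_remainder_le hs hf hf' hf'' hK hm hr
  have hL := abs_taylor₂_remainder_le hs hf hf' hf'' hK hm hl
  rw [abs_of_pos (sub_pos.2 hmr)] at hR
  rw [abs_of_neg (sub_neg.2 hlm)] at hL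
  have hK0 : 0 ≤ K := (abs_nonneg _).trans (hK b hm)
  have key : 2 / (c - a) * ((f c - f b) / (c - b) - (f b - f a) / (b - a)) - f'' b =
      2 / (c - a) * ((f c - f b - (c - b) * f' b - (c - b) ^ 2 / 2 * f'' b) / (c - b) +
        (f a - f b - (a - b) * f' b - (a - b) ^ 2 / 2 * f'' b) / (b - a)) := by
    field_simp [(sub_pos.2 hmr).ne', (sub_pos.2 hlm).ne', (sub_pos.2 (hlm.trans hmr)).ne']
    ring
  rw [key, abs_mul, abs_of_pos (div_pos two_pos (sub_pos.2 (hlm.trans hmr)))]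
  have hsum := abs_add_le ((f c - f b - (c - b) * f' b - (c - b) ^ 2 / 2 * f'' b) / (c - b))
    ((f a - f b - (a - b) * f' b - (a - b) ^ 2 / 2 * f'' b) / (b - a))
  rw [abs_div, abs_div, abs_of_pos (sub_pos.2 hmr), abs_of_pos (sub_pos.2 hlm)] at hsum
  have h1 := div_le_div_of_nonneg_right hR (sub_pos.2 hmr).le
  have h2 := div_le_div_of_nonneg_right hL (sub_pos.2 hlm).le
  rw [show K * (c - b) ^ 3 / (c - b) = K * (c - b) ^ 2 by field_simp [(sub_pos.2 hmr).ne']] at h1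
  rw [show K * (-(a - b)) ^ 3 / (b - a) = K * (b - a) ^ 2 by
    field_simp [(sub_pos.2 hlm).ne']; ring] at h2
  rw [div_mul_eq_mul_div, div_le_iff₀ (sub_pos.2 (hlm.trans hmr))]
  nlinarith [mul_nonneg hK0 (mul_nonneg (sub_pos.2 hmr).le (sub_pos.2 hlm).le)]

end Taylor

theorem meshSecondDiff_neg (X u : ℕ → ℝ) (j : ℕ) :
    meshSecondDiff X (fun i => -u i) j = -meshSecondDiff X u j := by
  unfold meshSecondDiff; ring

theorem meshSecondDiff_nonpos {X u : ℕ → ℝ} {j : ℕ} (hlm : X (j - 1) < X j) (hmr : X j < X (j + 1))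
    (hl : u (j - 1) ≤ u j) (hr : u (j + 1) ≤ u j) : meshSecondDiff X u j ≤ 0 := by
  unfold meshSecondDiff
  refine mul_nonpos_of_nonneg_of_nonpos (div_nonneg zero_le_two (by linarith)) (sub_nonpos.2 ?_)
  exact (div_nonpos_of_nonpos_of_nonneg (by linarith) (by linarith)).trans
    (div_nonneg (by linarith) (by linarith))

open Finset in
theorem sum_mul_le_sum_mul_of_offDiag_nonpos {ι : Type*} [Fintype ι] {a u : ι → ℝ} {i : ι}
    (ha : ∀ m, m ≠ i → a m ≤ 0) (hu : ∀ m, u m ≤ u i) : (∑ m, a m) * u i ≤ ∑ m, a m * u m := by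
  rw [sum_mul]
  refine sum_le_sum fun m _ => ?_
  rcases eq_or_ne m i with rfl | hm
  · exact le_rfl
  · exact mul_le_mul_of_nonpos_left (hu m) (ha m hm)

section ImplicitEuler

open Finset

variable {ι : Type*} [Fintype ι] {N : ℕ} {X : ℕ → ℝ} {Δ α B : ℝ} {ε c : ι → ℝ}

theorem le_of_implicitEuler_step {A : ι → ι → ℕ → ℝ} {u u₀ : ι → ℕ → ℝ}
    (hX : ∀ j < N, X j < X (j + 1)) (hΔ : 0 < Δ) (hα : 0 ≤ α) (hB : 0 ≤ B)
    (hε : ∀ i, 0 ≤ ε i) (hc : ∀ i, 0 ≤ c i)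
    (hoff : ∀ j, 0 < j → j < N → ∀ i m, m ≠ i → A i m j ≤ 0)
    (hrow : ∀ j, 0 < j → j < N → ∀ i, α ≤ ∑ m, A i m j)
    (hu₀ : ∀ i j, j ≤ N → u₀ i j ≤ B)
    (hint : ∀ i j, 0 < j → j < N →
      (u i j - u₀ i j) / Δ - ε i * meshSecondDiff X (u i) j + ∑ m, A i m j * u m j ≤ α * B)
    (hleft : ∀ i, u i 0 - c i * ((u i 1 - u i 0) / (X 1 - X 0)) ≤ B)
    (hright : ∀ i, u i N + c i * ((u i N - u i (N - 1)) / (X N - X (N - 1))) ≤ B) :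
    ∀ i j, j ≤ N → u i j ≤ B := by
  intro i j hj
  obtain ⟨⟨i₀, j₀⟩, hmem, hmax⟩ := exists_max_image (univ ×ˢ range (N + 1))
    (fun p => u p.1 p.2) ⟨(i, j), by simp; omega⟩
  replace hmax : ∀ m k, k ≤ N → u m k ≤ u i₀ j₀ := fun m k hk =>
    hmax (m, k) (by simp; omega)
  have hj₀ : j₀ ≤ N := by simp at hmem; omega
  refine (hmax i j hj).trans (not_lt.1 fun hlt => ?_)
  rcases eq_or_ne j₀ N with rfl | hN
  · have hslope : 0 ≤ (u i₀ j₀ - u i₀ (j₀ - 1)) / (X j₀ - X (j₀ - 1)) := by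
      refine div_nonneg (sub_nonneg.2 (hmax _ _ (by omega))) (sub_nonneg.2 ?_)
      rcases Nat.eq_zero_or_pos j₀ with h | h
      · simp [h]
      · simpa [Nat.sub_add_cancel h] using (hX (j₀ - 1) (by omega)).le
    linarith [hright i₀, mul_nonneg (hc i₀) hslope]
  rcases Nat.eq_zero_or_pos j₀ with rfl | hpos
  · have hslope : (u i₀ 1 - u i₀ 0) / (X 1 - X 0) ≤ 0 :=
      div_nonpos_of_nonpos_of_nonneg (sub_nonpos.2 (hmax _ _ (by omega)))
        (sub_nonneg.2 (hX 0 (by omega)).le)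
    linarith [hleft i₀, mul_nonpos_of_nonneg_of_nonpos (hc i₀) hslope]
  have hlt' : j₀ < N := by omega
  have htime : 0 < (u i₀ j₀ - u₀ i₀ j₀) / Δ :=
    div_pos (sub_pos.2 ((hu₀ i₀ j₀ hj₀).trans_lt hlt)) hΔ
  have hdiff : meshSecondDiff X (u i₀) j₀ ≤ 0 :=
    meshSecondDiff_nonpos (by simpa [Nat.sub_add_cancel hpos] using hX (j₀ - 1) (by omega))
      (hX j₀ hlt') (hmax _ _ (by omega)) (hmax _ _ (by omega))
  have hreact : α * u i₀ j₀ ≤ ∑ m, A i₀ m j₀ * u m j₀ :=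
    (mul_le_mul_of_nonneg_right (hrow j₀ hpos hlt' i₀) (hB.trans hlt.le)).trans
      (sum_mul_le_sum_mul_of_offDiag_nonpos (hoff j₀ hpos hlt' i₀) (fun m => hmax m j₀ hj₀))
  linarith [hint i₀ j₀ hpos hlt', mul_nonpos_of_nonneg_of_nonpos (hε i₀) hdiff,
    mul_le_mul_of_nonneg_left hlt.le hα]

theorem abs_le_of_implicitEuler {M : ℕ} {A : ι → ι → ℕ → ℕ → ℝ} {e : ι → ℕ → ℕ → ℝ}
    (hX : ∀ j < N, X j < X (j + 1)) (hΔ : 0 < Δ) (hα : 0 ≤ α) (hB : 0 ≤ B)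
    (hε : ∀ i, 0 ≤ ε i) (hc : ∀ i, 0 ≤ c i)
    (hoff : ∀ k, 0 < k → k ≤ M → ∀ j, 0 < j → j < N → ∀ i m, m ≠ i → A i m j k ≤ 0)
    (hrow : ∀ k, 0 < k → k ≤ M → ∀ j, 0 < j → j < N → ∀ i, α ≤ ∑ m, A i m j k)
    (hinit : ∀ i j, j ≤ N → |e i j 0| ≤ B)
    (hint : ∀ k, 0 < k → k ≤ M → ∀ i j, 0 < j → j < N →
      |(e i j k - e i j (k - 1)) / Δ - ε i * meshSecondDiff X (fun j => e i j k) j +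
        ∑ m, A i m j k * e m j k| ≤ α * B)
    (hleft : ∀ k, 0 < k → k ≤ M → ∀ i,
      |e i 0 k - c i * ((e i 1 k - e i 0 k) / (X 1 - X 0))| ≤ B)
    (hright : ∀ k, 0 < k → k ≤ M → ∀ i,
      |e i N k + c i * ((e i N k - e i (N - 1) k) / (X N - X (N - 1)))| ≤ B) :
    ∀ k ≤ M, ∀ i j, j ≤ N → |e i j k| ≤ B := by
  intro k
  induction k with
  | zero => exact fun _ => hinit
  | succ k ih =>
    intro hk
    have hpos : 0 < k + 1 := k.succ_pos
    have hprev := ih (by omega)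
    intro i j hj
    refine abs_le.2 ⟨neg_le.1 ?_, ?_⟩
    · refine le_of_implicitEuler_step (u := fun i j => -e i j (k + 1)) (u₀ := fun i j => -e i j k)
        hX hΔ hα hB hε hc (hoff _ hpos hk) (hrow _ hpos hk)
        (fun i j hj => neg_le.1 (abs_le.1 (hprev i j hj)).1) (fun i j h0 hN => ?_)
        (fun i => ?_) (fun i => ?_) i j hj
      · rw [meshSecondDiff_neg]
        refine le_trans (le_of_eq ?_) ((neg_le_abs _).trans (hint _ hpos hk i j h0 hN))
        simp only [Nat.add_sub_cancel, sum_neg_distrib, mul_neg]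
        ring
      · exact le_trans (le_of_eq (by ring)) ((neg_le_abs _).trans (hleft _ hpos hk i))
      · exact le_trans (le_of_eq (by ring)) ((neg_le_abs _).trans (hright _ hpos hk i))
    · exact le_of_implicitEuler_step (u := fun i j => e i j (k + 1)) (u₀ := fun i j => e i j k)
        hX hΔ hα hB hε hc (hoff _ hpos hk) (hrow _ hpos hk)
        (fun i j hj => (abs_le.1 (hprev i j hj)).2)
        (fun i j h0 hN => (le_abs_self _).trans (hint _ hpos hk i j h0 hN))
        (fun i => (le_abs_self _).trans (hleft _ hpos hk i))
        (fun i => (le_abs_self _).trans (hright _ hpos hk i)) i j hj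

end ImplicitEuler

section Consistency

open Set

theorem abs_implicitEuler_truncation_le {u : ℕ → ℕ → ℝ → ℝ → ℝ} {T ε K K₃ Δ t : ℝ}
    {X : ℕ → ℝ} {j : ℕ}
    (hx : ∀ l ≤ 2, ∀ y ∈ Icc (0 : ℝ) 1,
      HasDerivWithinAt (fun y => u l 0 y t) (u (l + 1) 0 y t) (Icc 0 1) y)
    (ht : ∀ m ≤ 1, ∀ s ∈ Icc 0 T,
      HasDerivWithinAt (fun s => u 0 m (X j) s) (u 0 (m + 1) (X j) s) (Icc 0 T) s)
    (hxxx : ∀ y ∈ Icc (0 : ℝ) 1, |u 3 0 y t| ≤ K₃) (htt : ∀ s ∈ Icc 0 T, |u 0 2 (X j) s| ≤ K)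
    (hε : 0 ≤ ε) (hεK : ε * K₃ ≤ K) (hΔ : 0 < Δ) (hΔt : Δ ≤ t) (htT : t ≤ T)
    (hl : 0 ≤ X (j - 1)) (hlm : X (j - 1) < X j) (hmr : X j < X (j + 1)) (hr : X (j + 1) ≤ 1) :
    |(u 0 0 (X j) t - u 0 0 (X j) (t - Δ)) / Δ - u 0 1 (X j) t -
      ε * (meshSecondDiff X (fun i => u 0 0 (X i) t) j - u 2 0 (X j) t)| ≤
      K * Δ + 2 * K * (X (j + 1) - X (j - 1)) := by
  have htime := abs_divDiff_sub_deriv_le (convex_Icc 0 T) (ht 0 (by norm_num)) (ht 1 le_rfl) htt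
    (x := t) (y := t - Δ) ⟨by linarith, htT⟩ ⟨by linarith, by linarith⟩ (by linarith)
  rw [show t - Δ - t = -Δ by ring, abs_neg, abs_of_pos hΔ, div_neg, ← neg_div, neg_sub] at htime
  have hspace := abs_meshSecondDiff_sub_le (convex_Icc 0 1) (hx 0 (by norm_num))
    (hx 1 (by norm_num)) (hx 2 le_rfl) hxxx ⟨hl, by linarith⟩ ⟨by linarith, by linarith⟩
    ⟨by linarith, hr⟩ hlm hmr
  calc _ ≤ |(u 0 0 (X j) t - u 0 0 (X j) (t - Δ)) / Δ - u 0 1 (X j) t| +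
        ε * |meshSecondDiff X (fun i => u 0 0 (X i) t) j - u 2 0 (X j) t| := by
        rw [← abs_of_nonneg hε, ← abs_mul, abs_of_nonneg hε]
        exact abs_sub _ _
    _ ≤ K * Δ + ε * (2 * K₃ * (X (j + 1) - X (j - 1))) :=
        add_le_add htime (mul_le_mul_of_nonneg_left hspace hε)
    _ ≤ K * Δ + 2 * K * (X (j + 1) - X (j - 1)) := by
        linarith [mul_le_mul_of_nonneg_right hεK (sub_nonneg.2 (hlm.trans hmr).le)]

end Consistency

section RobinBoundary

variable {f f' f'' : ℝ → ℝ} {s : Set ℝ} {K c h x y Ux Uy : ℝ}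

theorem abs_robin_residual_le (hs : Convex ℝ s) (hf : ∀ z ∈ s, HasDerivWithinAt f (f' z) s z)
    (hf' : ∀ z ∈ s, HasDerivWithinAt f' (f'' z) s z) (hK : ∀ z ∈ s, |f'' z| ≤ K)
    (hx : x ∈ s) (hy : y ∈ s) (hxy : x ≠ y) (hc : |c| ≤ 1) (hh : |y - x| ≤ h)
    (hU : Ux - c * ((Uy - Ux) / (y - x)) = f x - c * f' x) :
    |Ux - f x - c * ((Uy - f y - (Ux - f x)) / (y - x))| ≤ K * h := by
  have key : Ux - f x - c * ((Uy - f y - (Ux - f x)) / (y - x)) =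
      c * ((f y - f x) / (y - x) - f' x) := by
    rw [sub_div, sub_div, sub_div] at *
    linear_combination hU
  have hK0 : 0 ≤ K := (abs_nonneg _).trans (hK x hx)
  rw [key, abs_mul]
  calc |c| * |(f y - f x) / (y - x) - f' x| ≤ 1 * (K * h) :=
        mul_le_mul hc ((abs_divDiff_sub_deriv_le hs hf hf' hK hx hy hxy).trans
          (mul_le_mul_of_nonneg_left hh hK0)) (abs_nonneg _) zero_le_one
    _ = K * h := one_mul _

theorem div_sub_div_swap (a b c d : ℝ) : (a - b) / (c - d) = (b - a) / (d - c) := by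
  rw [← neg_div_neg_eq, neg_sub, neg_sub]

theorem abs_robin_residual_le' (hs : Convex ℝ s) (hf : ∀ z ∈ s, HasDerivWithinAt f (f' z) s z)
    (hf' : ∀ z ∈ s, HasDerivWithinAt f' (f'' z) s z) (hK : ∀ z ∈ s, |f'' z| ≤ K)
    (hx : x ∈ s) (hy : y ∈ s) (hxy : x ≠ y) (hc : |c| ≤ 1) (hh : |x - y| ≤ h)
    (hU : Ux + c * ((Ux - Uy) / (x - y)) = f x + c * f' x) :
    |Ux - f x + c * ((Ux - f x - (Uy - f y)) / (x - y))| ≤ K * h := by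
  have hres := abs_robin_residual_le (c := -c) (h := h) (Ux := Ux) (Uy := Uy) hs hf hf' hK hx hy
    hxy (by rwa [abs_neg]) (by rwa [abs_sub_comm])
    (by rw [div_sub_div_swap]; linear_combination hU)
  rwa [div_sub_div_swap, neg_mul, sub_neg_eq_add] at hres

end RobinBoundary

theorem mul_mul_rpow_neg_half_le {x C : ℝ} (hx0 : 0 ≤ x) (hx1 : x ≤ 1) (hC : 0 ≤ C) :
    x * (C * x ^ (-(1 / 2 : ℝ))) ≤ C := by
  rw [mul_left_comm, Real.rpow_neg hx0, ← Real.sqrt_eq_rpow, ← div_eq_mul_inv, Real.div_sqrt]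
  exact mul_le_of_le_one_right hC (Real.sqrt_le_one.2 hx1)

theorem natCast_mul_div_mem_Icc {T : ℝ} (hT : 0 ≤ T) {k M : ℕ} (hk : k ≤ M) :
    (k : ℝ) * T / M ∈ Set.Icc 0 T := by
  rcases Nat.eq_zero_or_pos M with rfl | hM
  · simp [hT]
  refine ⟨by positivity, div_le_of_le_mul₀ (by positivity) hT ?_⟩
  rw [mul_comm]
  exact mul_le_mul_of_nonneg_left (by exact_mod_cast hk) hT

theorem error_rate_bounds {T α C0 : ℝ} {q M : ℕ} (hT : 0 ≤ T) (hα : 0 < α) (hq : q ≠ 0) :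
    C0 * (T / M) + 2 * C0 * (1 / (2 * q)) ≤ α * ((|C0| * ((T + 8) / α + 2) + 1) *
        ((M : ℝ)⁻¹ + (8 * (q : ℝ))⁻¹ * Real.log (8 * (q : ℝ)))) ∧
      C0 * (1 / (4 * q)) ≤ (|C0| * ((T + 8) / α + 2) + 1) *
        ((M : ℝ)⁻¹ + (8 * (q : ℝ))⁻¹ * Real.log (8 * (q : ℝ))) := by
  set S := (M : ℝ)⁻¹ + (8 * (q : ℝ))⁻¹ * Real.log (8 * (q : ℝ))
  have hlog := one_le_log_eight_mul hq
  have hq' : (0 : ℝ) < q := by positivity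
  have hSM : (M : ℝ)⁻¹ ≤ S := le_add_of_nonneg_right (by positivity)
  have hSq : (8 * (q : ℝ))⁻¹ ≤ S :=
    (le_mul_of_one_le_right (by positivity) hlog).trans (le_add_of_nonneg_left (by positivity))
  have hS : 0 ≤ S := by positivity
  have hC0 := le_abs_self C0
  have h1 : C0 * (T / M) ≤ |C0| * (T * S) := mul_le_mul hC0
    (by rw [div_eq_mul_inv]; exact mul_le_mul_of_nonneg_left hSM hT) (by positivity) (abs_nonneg _)
  have h2 : 2 * C0 * (1 / (2 * q)) ≤ |C0| * (8 * S) := by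
    rw [show 2 * C0 * (1 / (2 * q)) = C0 * (8 * (8 * (q : ℝ))⁻¹) by field_simp]
    exact mul_le_mul hC0 (by linarith) (by positivity) (abs_nonneg _)
  have h3 : C0 * (1 / (4 * q)) ≤ |C0| * (2 * S) := by
    rw [show 1 / (4 * (q : ℝ)) = 2 * (8 * (q : ℝ))⁻¹ by field_simp; norm_num]
    exact mul_le_mul hC0 (by linarith) (by positivity) (abs_nonneg _)
  have hαC : α * ((|C0| * ((T + 8) / α + 2) + 1) * S) =
      |C0| * (T * S) + |C0| * (8 * S) + α * ((2 * |C0| + 1) * S) := by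
    field_simp
    ring
  have hC : (|C0| * ((T + 8) / α + 2) + 1) * S = |C0| * ((T + 8) / α) * S + |C0| * (2 * S) + S := by
    ring
  constructor
  · rw [hαC]
    linarith [mul_nonneg hα.le (mul_nonneg (by positivity : (0 : ℝ) ≤ 2 * |C0| + 1) hS)]
  · rw [hC]
    linarith [mul_nonneg (by positivity : (0 : ℝ) ≤ |C0| * ((T + 8) / α)) hS]

/- `vD i l m` stands for `∂ₓ^l ∂ₜ^m vᵢ`. -/
theorem stmt_19
    (T : ℝ) (hT : 0 < T) (α : ℝ) (hα0 : 0 < α) (C0 KA : ℝ) :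
    ∃ C : ℝ, 0 < C ∧
      ∀ (ε : Fin 2 → ℝ), (∀ i, 0 < ε i) → ε 0 < ε 1 → (∀ i, ε i < 1) →
      Real.sqrt (ε 1) ≤ Real.sqrt α / 6 →
      -- the matrix A, bounded in sup norm by KA :
      ∀ (a : Fin 2 → Fin 2 → ℝ → ℝ → ℝ),
      (∀ i j, ContinuousOn (fun p : ℝ × ℝ => a i j p.1 p.2)
        (Set.Icc 0 1 ×ˢ Set.Icc 0 T)) →
      (∀ i j, ∀ x ∈ Set.Icc (0:ℝ) 1, ∀ t ∈ Set.Icc (0:ℝ) T, |a i j x t| ≤ KA) →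
      (∀ i, ∀ x ∈ Set.Icc (0:ℝ) 1, ∀ t ∈ Set.Icc (0:ℝ) T,
        ∑ j ∈ Finset.univ.erase i, |a i j x t| < a i i x t) →
      (∀ i j, i ≠ j → ∀ x ∈ Set.Icc (0:ℝ) 1, ∀ t ∈ Set.Icc (0:ℝ) T,
        a i j x t ≤ 0) →
      (∀ i, ∀ x ∈ Set.Icc (0:ℝ) 1, ∀ t ∈ Set.Icc (0:ℝ) T, α < ∑ j, a i j x t) →
      ∀ (f : Fin 2 → ℝ → ℝ → ℝ),
      -- the smooth component v with its partial derivatives :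
      ∀ (vD : Fin 2 → ℕ → ℕ → ℝ → ℝ → ℝ),
      (∀ i l m, (l + 1 ≤ 4 ∧ m = 0) ∨ (l + 1 ≤ 2 ∧ m = 1) →
        ∀ t ∈ Set.Icc (0:ℝ) T, ∀ x ∈ Set.Icc (0:ℝ) 1,
        HasDerivWithinAt (fun y => vD i l m y t) (vD i (l + 1) m x t)
          (Set.Icc 0 1) x) →
      (∀ i l m, (l = 0 ∧ m + 1 ≤ 2) ∨ (l ≤ 2 ∧ m + 1 = 1) →
        ∀ x ∈ Set.Icc (0:ℝ) 1, ∀ t ∈ Set.Icc (0:ℝ) T,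
        HasDerivWithinAt (fun s => vD i l m x s) (vD i l (m + 1) x t)
          (Set.Icc 0 T) t) →
      (∀ i l m, (m ≤ 2 ∧ l = 0) ∨ (l ≤ 4 ∧ m = 0) ∨ (l ≤ 2 ∧ m = 1) →
        ContinuousOn (fun p : ℝ × ℝ => vD i l m p.1 p.2)
          (Set.Icc 0 1 ×ˢ Set.Icc 0 T)) →
      -- v satisfies L v = f on Ω :
      (∀ i, ∀ x ∈ Set.Ioo (0:ℝ) 1, ∀ t ∈ Set.Ioc (0:ℝ) T,
        vD i 0 1 x t - ε i * vD i 2 0 x t +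
          ∑ j, a i j x t * vD j 0 0 x t = f i x t) →
      -- the bounds on v and its derivatives :
      (∀ i, ∀ x ∈ Set.Icc (0:ℝ) 1, ∀ t ∈ Set.Icc (0:ℝ) T,
        (∀ m ≤ 2, |vD i 0 m x t| ≤ C0) ∧
        (∀ l, 1 ≤ l → l ≤ 2 → |vD i l 0 x t| ≤ C0) ∧
        (∀ l, 3 ≤ l → l ≤ 4 →
          |vD i l 0 x t| ≤ C0 * (ε i) ^ (-((l : ℝ) - 2) / 2)) ∧
        (∀ l, 1 ≤ l → l ≤ 2 → |vD i l 1 x t| ≤ C0)) →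
      -- the Shishkin grid :
      ∀ q : ℕ, 3 ≤ q → ∀ M : ℕ, 1 ≤ M →
      ∀ X : ℕ → ℝ, (∀ j, X j = shMesh α (ε 0) (ε 1) q j) →
      ∀ tg : ℕ → ℝ, (∀ k : ℕ, tg k = (k : ℝ) * T / (M : ℝ)) →
      -- the discrete smooth component V :
      ∀ (V : Fin 2 → ℕ → ℕ → ℝ),
      (∀ i, ∀ j, 1 ≤ j → j ≤ 8 * q - 1 → ∀ k, 1 ≤ k → k ≤ M →
        (V i j k - V i j (k - 1)) / (T / (M : ℝ))
          - ε i * (2 / (X (j + 1) - X (j - 1)) *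
              ((V i (j + 1) k - V i j k) / (X (j + 1) - X j)
                - (V i j k - V i (j - 1) k) / (X j - X (j - 1))))
          + ∑ m, a i m (X j) (tg k) * V m j k = f i (X j) (tg k)) →
      (∀ i, ∀ k, 1 ≤ k → k ≤ M →
        V i 0 k - Real.sqrt (ε i) * ((V i 1 k - V i 0 k) / (X 1 - X 0)) =
          vD i 0 0 0 (tg k) - Real.sqrt (ε i) * vD i 1 0 0 (tg k)) →
      (∀ i, ∀ k, 1 ≤ k → k ≤ M →
        V i (8 * q) k + Real.sqrt (ε i) *
            ((V i (8 * q) k - V i (8 * q - 1) k) / (X (8 * q) - X (8 * q - 1))) =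
          vD i 0 0 1 (tg k) + Real.sqrt (ε i) * vD i 1 0 1 (tg k)) →
      (∀ i, ∀ j ≤ 8 * q, V i j 0 = vD i 0 0 (X j) 0) →
      -- the error estimate :
      ∀ i, ∀ j ≤ 8 * q, ∀ k ≤ M,
        |V i j k - vD i 0 0 (X j) (tg k)| ≤
          C * ((M : ℝ)⁻¹ + (8 * (q : ℝ))⁻¹ * Real.log (8 * (q : ℝ))) := by
  refine ⟨|C0| * ((T + 8) / α + 2) + 1, by positivity, ?_⟩
  intro ε hε _ hε1 _ a _ _ _ hoff hrow f vD hDx hDt _ hPDE hbnd q hq M hM X hX tg htg V hV hB0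
    hB1 hinit
  obtain rfl : X = shMesh α (ε 0) (ε 1) q := funext hX
  obtain rfl : tg = fun k : ℕ => (k : ℝ) * T / M := funext htg
  have hq0 : q ≠ 0 := by omega
  have hXmono := shMesh_strictMono hα0 (hε 0) (hε 1) hq0
  have hXmem : ∀ j ≤ 8 * q, shMesh α (ε 0) (ε 1) q j ∈ Set.Icc 0 1 :=
    fun j => shMesh_mem_Icc hα0 (hε 0) (hε 1) hq0
  have hXstep := abs_shMesh_succ_sub_le hα0 (hε 0) (hε 1) hq0
  have htmem : ∀ k ≤ M, (k : ℝ) * T / M ∈ Set.Icc 0 T := fun k => natCast_mul_div_mem_Icc hT.le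
  have hC0 : 0 ≤ C0 := (abs_nonneg _).trans ((hbnd 0 0 (by simp) 0 ⟨le_rfl, hT.le⟩).1 0 (by simp))
  have hc : ∀ i, |√(ε i)| ≤ 1 := fun i => by
    rw [abs_of_nonneg (Real.sqrt_nonneg _)]; exact Real.sqrt_le_one.2 (hε1 i).le
  have hx : ∀ i, ∀ t ∈ Set.Icc 0 T, ∀ l ≤ 2, ∀ y ∈ Set.Icc (0 : ℝ) 1,
      HasDerivWithinAt (fun y => vD i l 0 y t) (vD i (l + 1) 0 y t) (Set.Icc 0 1) y :=
    fun i t ht l hl => hDx i l 0 (.inl ⟨by omega, rfl⟩) t ht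
  have hxx : ∀ i, ∀ t ∈ Set.Icc 0 T, ∀ y ∈ Set.Icc (0 : ℝ) 1, |vD i 2 0 y t| ≤ C0 :=
    fun i t ht y hy => (hbnd i y hy t ht).2.1 2 (by norm_num) le_rfl
  obtain ⟨hint_bd, hbdry_bd⟩ := error_rate_bounds (C0 := C0) (M := M) hT.le hα0 hq0
  have hB := (mul_nonneg hC0 (by positivity)).trans hbdry_bd
  refine fun i j hj k hk => abs_le_of_implicitEuler (N := 8 * q) (Δ := T / M) (c := fun i => √(ε i))
    (A := fun i m j k => a i m (shMesh α (ε 0) (ε 1) q j) (k * T / M))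
    (e := fun i j k => V i j k - vD i 0 0 (shMesh α (ε 0) (ε 1) q j) (k * T / M))
    (fun j _ => hXmono j.lt_succ_self) (by positivity) hα0.le hB (fun i => (hε i).le)
    (fun i => Real.sqrt_nonneg _)
    (fun k _ hk j _ hj i m hmi => hoff i m hmi.symm _ (hXmem j (by omega)) _ (htmem k hk))
    (fun k _ hk j _ hj i => (hrow i _ (hXmem j (by omega)) _ (htmem k hk)).le)
    (fun i j hj => by simpa [hinit i j hj] using hB) ?_ ?_ ?_ k hk i j hj
  · intro k hk0 hkM i j hj0 hjN
    have htk := htmem k hkM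
    have hXj := hXmem j (by omega)
    have hvk := hPDE i _ ⟨(hXmono hj0).trans_le' (by rw [shMesh_zero]),
      (hXmono hjN).trans_le (by rw [shMesh_eight_mul hq0])⟩ _ ⟨by positivity, htk.2⟩
    have htrunc := abs_implicitEuler_truncation_le (hx i _ htk)
      (fun m hm s hs => hDt i 0 m (.inl ⟨rfl, by omega⟩) _ hXj s hs)
      (fun y hy => (hbnd i y hy _ htk).2.2.1 3 le_rfl (by norm_num))
      (fun s hs => (hbnd i _ hXj s hs).1 2 le_rfl) (hε i).le
      (by norm_num; exact mul_mul_rpow_neg_half_le (hε i).le (hε1 i).le hC0) (by positivity)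
      (div_le_div_of_nonneg_right (le_mul_of_one_le_left hT.le (by exact_mod_cast hk0))
        (Nat.cast_nonneg M)) htk.2 (hXmem _ (by omega)).1 (hXmono (by omega))
      (hXmono (by omega)) (hXmem _ (by omega)).2
    refine (le_of_eq ?_).trans (htrunc.trans (le_trans ?_ hint_bd))
    · rw [← abs_neg, show ((k - 1 : ℕ) : ℝ) * T / M = k * T / M - T / M by
        rw [Nat.cast_sub hk0]; ring]
      congr 1
      simp only [meshSecondDiff, mul_sub, Finset.sum_sub_distrib]
      linear_combination hvk - hV i j hj0 (by omega) k hk0 hkM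
    · gcongr
      exact shMesh_succ_sub_pred_le hα0 (hε 0) (hε 1) hq0 hj0
  · intro k hk0 hkM i
    have htk := htmem k hkM
    exact (abs_robin_residual_le (convex_Icc 0 1) (hx i _ htk 0 (by norm_num))
      (hx i _ htk 1 (by norm_num)) (hxx i _ htk) (hXmem 0 (by omega)) (hXmem 1 (by omega))
      (hXmono one_pos).ne (hc i) (hXstep 0)
      (by simpa only [shMesh_zero] using hB0 i k hk0 hkM)).trans hbdry_bd
  · intro k hk0 hkM i
    have htk := htmem k hkM
    have hN : 8 * q - 1 + 1 = 8 * q := by omega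
    exact (abs_robin_residual_le' (convex_Icc 0 1) (hx i _ htk 0 (by norm_num))
      (hx i _ htk 1 (by norm_num)) (hxx i _ htk) (hXmem _ le_rfl) (hXmem (8 * q - 1) (by omega))
      (hXmono (by omega)).ne' (hc i) (by simpa only [hN] using hXstep (8 * q - 1))
      (by simpa only [shMesh_eight_mul hq0] using hB1 i k hk0 hkM)).trans hbdry_bd
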